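/- arXiv:0810.1980 — 4 statements merged into one kernel-verified Lean document; each statement's English description precedes it below -/
import Mathlib

section
/- Fix ρ, λ ∈ [0,1], R2 ∈ ℝ, and pmfs Q1 on 𝒳1 and Q2 on 𝒳2. Let D(Q1,Q2) be the set of pairs (P,P') of joint pmfs on 𝒳1×𝒳2×𝒴1 with P_{X̂1} = P_{X̂1'} = Q1 and P_{X̂2} = P_{X̂2'} = Q2. Then D(Q1,Q2) is a convex set and the function (P,P') ↦ f1(ρ,λ,P,P') is convex on it: for all (P,P'), (P̃,P̃') ∈ D(Q1,Q2) and all t ∈ [0,1], f1(ρ,λ, t·P+(1−t)·P̃, t·P'+(1−t)·P̃') ≤ t·f1(ρ,λ,P,P') + (1−t)·f1(ρ,λ,P̃,P̃'). -/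
open Finset

section InfoDefs

variable {Ω : Type*} [Fintype Ω]

/-- A probability mass function on a finite type. -/
def IsPMF {α : Type*} [Fintype α] (p : α → ℝ) : Prop :=
  (∀ a, 0 ≤ p a) ∧ ∑ a, p a = 1

/-- Pushforward of `P` along `f` (the pmf of the random variable `f`). -/
noncomputable def pushf {α : Type*} [Fintype α] [DecidableEq α]
    (P : Ω → ℝ) (f : Ω → α) (a : α) : ℝ :=
  ∑ ω, if f ω = a then P ω else 0

/-- Entropy of the random variable `f` under `P`. -/
noncomputable def entH {α : Type*} [Fintype α] [DecidableEq α]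
    (P : Ω → ℝ) (f : Ω → α) : ℝ :=
  -∑ a, pushf P f a * Real.log (pushf P f a)

/-- Conditional entropy `H(g | f)` under `P`. -/
noncomputable def condEnt {α β : Type*} [Fintype α] [DecidableEq α] [Fintype β] [DecidableEq β]
    (P : Ω → ℝ) (f : Ω → α) (g : Ω → β) : ℝ :=
  -∑ a, ∑ b, pushf P (fun ω => (f ω, g ω)) (a, b) *
      Real.log (pushf P (fun ω => (f ω, g ω)) (a, b) / pushf P f a)

/-- Mutual information `I(f;g)` under `P`. -/
noncomputable def mutI {α β : Type*} [Fintype α] [DecidableEq α] [Fintype β] [DecidableEq β]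
    (P : Ω → ℝ) (f : Ω → α) (g : Ω → β) : ℝ :=
  ∑ a, ∑ b, pushf P (fun ω => (f ω, g ω)) (a, b) *
      Real.log (pushf P (fun ω => (f ω, g ω)) (a, b) / (pushf P f a * pushf P g b))

/-- Conditional mutual information `I(f;g|h)` under `P`. -/
noncomputable def condMutI {α β γ : Type*} [Fintype α] [DecidableEq α] [Fintype β]
    [DecidableEq β] [Fintype γ] [DecidableEq γ]
    (P : Ω → ℝ) (f : Ω → α) (g : Ω → β) (h : Ω → γ) : ℝ :=
  ∑ a, ∑ b, ∑ c, pushf P (fun ω => (f ω, g ω, h ω)) (a, b, c) *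
      Real.log (pushf P (fun ω => (f ω, g ω, h ω)) (a, b, c) * pushf P h c /
        (pushf P (fun ω => (f ω, h ω)) (a, c) * pushf P (fun ω => (g ω, h ω)) (b, c)))

end InfoDefs
section IFC

variable {X1 X2 Y1 : Type*} [Fintype X1] [DecidableEq X1] [Fintype X2] [DecidableEq X2]
  [Fintype Y1] [DecidableEq Y1]

/-- The function `g(ρ,λ,P,P')`. -/
noncomputable def gFun (q1 : X1 → X2 → Y1 → ℝ) (ρ lam : ℝ)
    (P P' : X1 × X2 × Y1 → ℝ) : ℝ :=
  -(1 - ρ * lam) * (∑ z, P z * Real.log (q1 z.1 z.2.1 z.2.2))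
    - ρ * lam * (∑ z, P' z * Real.log (q1 z.1 z.2.1 z.2.2))

/-- The function `f1(ρ,λ,P,P')`. -/
noncomputable def f1Fun (q1 : X1 → X2 → Y1 → ℝ) (R2 ρ lam : ℝ)
    (P P' : X1 × X2 × Y1 → ℝ) : ℝ :=
  gFun q1 ρ lam P P'
    - condEnt P (fun z => z.1) (fun z => z.2.2)
    + ρ * mutI P' (fun z => z.1) (fun z => z.2.2)
    + max (mutI P (fun z => z.2.1) (fun z => (z.1, z.2.2)) - R2)
        ((1 - ρ * lam) * (mutI P (fun z => z.2.1) (fun z => (z.1, z.2.2)) - R2))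
    + max (max ((1 - ρ) * mutI P' (fun z => z.2.1) (fun z => z.2.2)
            + ρ * mutI P' (fun z => z.2.1) (fun z => (z.1, z.2.2)) - R2)
          (ρ * (mutI P' (fun z => z.2.1) (fun z => (z.1, z.2.2)) - R2)))
        (ρ * lam * (mutI P' (fun z => z.2.1) (fun z => (z.1, z.2.2)) - R2))

/-- The function `f2(ρ,λ,P,P')`. -/
noncomputable def f2Fun (q1 : X1 → X2 → Y1 → ℝ) (R2 ρ lam : ℝ)
    (P P' : X1 × X2 × Y1 → ℝ) : ℝ :=
  gFun q1 ρ lam P P'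
    - condEnt P (fun z => z.1) (fun z => z.2.2)
    + ρ * mutI P' (fun z => z.1) (fun z => (z.2.1, z.2.2))
    + mutI P (fun z => z.2.1) (fun z => (z.1, z.2.2)) - R2

/-- The constraint set `S1(Q1,Q2)`. -/
def S1set (Y1 : Type*) [Fintype Y1] [DecidableEq Y1] (Q1 : X1 → ℝ) (Q2 : X2 → ℝ) :
    Set ((X1 × X2 × Y1 → ℝ) × (X1 × X2 × Y1 → ℝ)) :=
  {PP | IsPMF PP.1 ∧ IsPMF PP.2 ∧
    pushf PP.1 (fun z => z.2.2) = pushf PP.2 (fun z => z.2.2) ∧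
    pushf PP.1 (fun z => z.1) = Q1 ∧ pushf PP.2 (fun z => z.1) = Q1 ∧
    pushf PP.1 (fun z => z.2.1) = Q2 ∧ pushf PP.2 (fun z => z.2.1) = Q2}

/-- The constraint set `S2(Q1,Q2,R2)`. -/
def S2set (Y1 : Type*) [Fintype Y1] [DecidableEq Y1] (Q1 : X1 → ℝ) (Q2 : X2 → ℝ) (R2 : ℝ) :
    Set ((X1 × X2 × Y1 → ℝ) × (X1 × X2 × Y1 → ℝ)) :=
  {PP | IsPMF PP.1 ∧ IsPMF PP.2 ∧
    pushf PP.1 (fun z => z.1) = Q1 ∧ pushf PP.2 (fun z => z.1) = Q1 ∧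
    pushf PP.1 (fun z => z.2.1) = Q2 ∧ pushf PP.2 (fun z => z.2.1) = Q2 ∧
    R2 ≤ mutI PP.1 (fun z => z.2.1) (fun z => z.2.2) ∧
    pushf PP.1 (fun z => (z.2.1, z.2.2)) = pushf PP.2 (fun z => (z.2.1, z.2.2))}

/-- The error exponent `E_{R,1}(R1,R2,Q1,Q2,ρ,λ)` (with `+∞` for infima over empty sets). -/
noncomputable def ER1 (q1 : X1 → X2 → Y1 → ℝ) (R1 R2 : ℝ) (Q1 : X1 → ℝ) (Q2 : X2 → ℝ)
    (ρ lam : ℝ) : EReal :=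
  ((R2 - ρ * R1 : ℝ) : EReal) +
    min (⨅ PP : S1set Y1 Q1 Q2, ((f1Fun q1 R2 ρ lam PP.1.1 PP.1.2 : ℝ) : EReal))
        (⨅ PP : S2set Y1 Q1 Q2 R2, ((f2Fun q1 R2 ρ lam PP.1.1 PP.1.2 : ℝ) : EReal))

end IFC

/-- The set `D(Q1,Q2)` of pairs of joint pmfs with the prescribed `X1`- and `X2`-marginals. -/
def DsetPair (Y1 : Type*) [Fintype Y1] [DecidableEq Y1] {X1 X2 : Type*}
    [Fintype X1] [DecidableEq X1] [Fintype X2] [DecidableEq X2]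
    (Q1 : X1 → ℝ) (Q2 : X2 → ℝ) :
    Set ((X1 × X2 × Y1 → ℝ) × (X1 × X2 × Y1 → ℝ)) :=
  {PP | IsPMF PP.1 ∧ IsPMF PP.2 ∧
    pushf PP.1 (fun z => z.1) = Q1 ∧ pushf PP.2 (fun z => z.1) = Q1 ∧
    pushf PP.1 (fun z => z.2.1) = Q2 ∧ pushf PP.2 (fun z => z.2.1) = Q2}


section AuxConvexity


lemma one_sub_inv_le_log {x : ℝ} (hx : 0 < x) : 1 - 1/x ≤ Real.log x := by
  have h := Real.log_le_sub_one_of_pos (show (0:ℝ) < 1/x by positivity)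
  rw [Real.log_div one_ne_zero (ne_of_gt hx), Real.log_one] at h
  linarith

lemma logSum2 (A B C D : ℝ) (hA : 0 ≤ A) (hC : 0 ≤ C) (hB : 0 ≤ B) (hD : 0 ≤ D)
    (hAB : B = 0 → A = 0) (hCD : D = 0 → C = 0) :
    (A + C) * Real.log ((A + C) / (B + D)) ≤ A * Real.log (A / B) + C * Real.log (C / D) := by
  rcases eq_or_lt_of_le hB with hB0 | hBpos
  · have hA0 := hAB hB0.symm
    simp [hA0, ← hB0]
  rcases eq_or_lt_of_le hD with hD0 | hDpos
  · have hC0 := hCD hD0.symm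
    simp [hC0, ← hD0]
  have hBD : 0 < B + D := by linarith
  rcases eq_or_lt_of_le hA with hA0 | hApos
  · rw [← hA0]
    simp only [zero_add, zero_mul]
    rcases eq_or_lt_of_le hC with hC0 | hCpos
    · simp [← hC0]
    · have : Real.log (C / (B + D)) ≤ Real.log (C / D) := by
        apply Real.log_le_log (by positivity)
        apply div_le_div_of_nonneg_left hC hDpos (by linarith)
      nlinarith
  rcases eq_or_lt_of_le hC with hC0 | hCpos
  · rw [← hC0]
    simp only [add_zero, zero_mul]
    have : Real.log (A / (B + D)) ≤ Real.log (A / B) := by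
      apply Real.log_le_log (by positivity)
      apply div_le_div_of_nonneg_left hA hBpos (by linarith)
    nlinarith
  -- main case: all positive
  have hAC : 0 < A + C := by linarith
  have h1 : 1 - (B * (A + C)) / (A * (B + D)) ≤ Real.log (A / B) - Real.log ((A + C) / (B + D)) := by
    have := one_sub_inv_le_log (x := (A / B) / ((A + C) / (B + D))) (by positivity)
    rw [Real.log_div (by positivity) (by positivity)] at this
    have heq : 1 / ((A / B) / ((A + C) / (B + D))) = (B * (A + C)) / (A * (B + D)) := by
      field_simp
    rw [heq] at this
    linarith
  have h2 : 1 - (D * (A + C)) / (C * (B + D)) ≤ Real.log (C / D) - Real.log ((A + C) / (B + D)) := by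
    have := one_sub_inv_le_log (x := (C / D) / ((A + C) / (B + D))) (by positivity)
    rw [Real.log_div (by positivity) (by positivity)] at this
    have heq : 1 / ((C / D) / ((A + C) / (B + D))) = (D * (A + C)) / (C * (B + D)) := by
      field_simp
    rw [heq] at this
    linarith
  have key : A * (1 - (B * (A + C)) / (A * (B + D))) + C * (1 - (D * (A + C)) / (C * (B + D))) = 0 := by
    field_simp
    ring
  nlinarith [mul_le_mul_of_nonneg_left h1 hA, mul_le_mul_of_nonneg_left h2 hC]

lemma phi_scale (s u v : ℝ) (hs : 0 ≤ s) :
    (s * u) * Real.log ((s * u) / (s * v)) = s * (u * Real.log (u / v)) := by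
  rcases eq_or_lt_of_le hs with hs0 | hspos
  · simp [← hs0]
  · rw [mul_div_mul_left _ _ (ne_of_gt hspos)]; ring

lemma phi_seg (t u1 v1 u2 v2 : ℝ) (ht0 : 0 ≤ t) (ht1 : t ≤ 1)
    (hu1 : 0 ≤ u1) (hu2 : 0 ≤ u2) (hv1 : 0 ≤ v1) (hv2 : 0 ≤ v2)
    (h1 : v1 = 0 → u1 = 0) (h2 : v2 = 0 → u2 = 0) :
    (t * u1 + (1 - t) * u2) * Real.log ((t * u1 + (1 - t) * u2) / (t * v1 + (1 - t) * v2)) ≤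
      t * (u1 * Real.log (u1 / v1)) + (1 - t) * (u2 * Real.log (u2 / v2)) := by
  have ht1' : 0 ≤ 1 - t := by linarith
  have := logSum2 (t * u1) (t * v1) ((1 - t) * u2) ((1 - t) * v2)
    (by positivity) (by positivity) (by positivity) (by positivity)
    (fun h => by rcases mul_eq_zero.1 h with h | h
                 · simp [h]
                 · simp [h1 h])
    (fun h => by rcases mul_eq_zero.1 h with h | h
                 · simp [h]
                 · simp [h2 h])
  rw [phi_scale t u1 v1 ht0, phi_scale (1 - t) u2 v2 ht1'] at this
  exact this

variable {Ω : Type*} [Fintype Ω]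

lemma pushf_nonneg {α : Type*} [Fintype α] [DecidableEq α] {P : Ω → ℝ}
    (hP : ∀ ω, 0 ≤ P ω) (f : Ω → α) (a : α) : 0 ≤ pushf P f a := by
  apply Finset.sum_nonneg
  intro ω _
  split <;> simp [hP ω]

lemma pushf_pair_le_left {α β : Type*} [Fintype α] [DecidableEq α] [Fintype β] [DecidableEq β]
    {P : Ω → ℝ} (hP : ∀ ω, 0 ≤ P ω) (f : Ω → α) (g : Ω → β) (a : α) (b : β) :
    pushf P (fun ω => (f ω, g ω)) (a, b) ≤ pushf P f a := by
  apply Finset.sum_le_sum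
  intro ω _
  by_cases h : (f ω, g ω) = (a, b)
  · obtain ⟨h1, h2⟩ := Prod.mk.injEq .. ▸ h
    simp [h, h1, h2]
  · simp [h]
    split <;> simp [hP ω]

lemma pushf_pair_le_right {α β : Type*} [Fintype α] [DecidableEq α] [Fintype β] [DecidableEq β]
    {P : Ω → ℝ} (hP : ∀ ω, 0 ≤ P ω) (f : Ω → α) (g : Ω → β) (a : α) (b : β) :
    pushf P (fun ω => (f ω, g ω)) (a, b) ≤ pushf P g b := by
  apply Finset.sum_le_sum
  intro ω _
  by_cases h : (f ω, g ω) = (a, b)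
  · obtain ⟨h1, h2⟩ := Prod.mk.injEq .. ▸ h
    simp [h, h1, h2]
  · simp [h]
    split <;> simp [hP ω]

lemma pushf_lin {α : Type*} [Fintype α] [DecidableEq α] (t s : ℝ) (P Pt : Ω → ℝ)
    (f : Ω → α) (a : α) :
    pushf (fun ω => t * P ω + s * Pt ω) f a = t * pushf P f a + s * pushf Pt f a := by
  unfold pushf
  rw [Finset.mul_sum, Finset.mul_sum, ← Finset.sum_add_distrib]
  apply Finset.sum_congr rfl
  intro ω _
  split <;> simp

lemma sum_mix {ι : Type*} [Fintype ι] (t s : ℝ) (P Pt L : ι → ℝ) :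
    ∑ z, (t * P z + s * Pt z) * L z = t * ∑ z, P z * L z + s * ∑ z, Pt z * L z := by
  rw [Finset.mul_sum, Finset.mul_sum, ← Finset.sum_add_distrib]
  apply Finset.sum_congr rfl
  intro z _
  ring

lemma IsPMF_mix {α : Type*} [Fintype α] {p q : α → ℝ} (hp : IsPMF p) (hq : IsPMF q)
    (t s : ℝ) (ht : 0 ≤ t) (hs : 0 ≤ s) (hts : t + s = 1) :
    IsPMF (fun a => t * p a + s * q a) := by
  refine ⟨fun a => add_nonneg (mul_nonneg ht (hp.1 a)) (mul_nonneg hs (hq.1 a)), ?_⟩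
  rw [Finset.sum_add_distrib, ← Finset.mul_sum, ← Finset.mul_sum, hp.2, hq.2]
  linarith

lemma pushf_mix_eq {α : Type*} [Fintype α] [DecidableEq α] {P Pt : Ω → ℝ} {f : Ω → α}
    {Q : α → ℝ} (h1 : pushf P f = Q) (h2 : pushf Pt f = Q) (t s : ℝ) (hts : t + s = 1) :
    pushf (fun ω => t * P ω + s * Pt ω) f = Q := by
  funext a
  rw [pushf_lin, h1, h2]
  linear_combination (Q a) * hts

/-- Concavity of conditional entropy along segments. -/
lemma condEnt_seg {α β : Type*} [Fintype α] [DecidableEq α] [Fintype β] [DecidableEq β]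
    (P Pt : Ω → ℝ) (hP : ∀ ω, 0 ≤ P ω) (hPt : ∀ ω, 0 ≤ Pt ω)
    (f : Ω → α) (g : Ω → β) (t : ℝ) (ht0 : 0 ≤ t) (ht1 : t ≤ 1) :
    t * condEnt P f g + (1 - t) * condEnt Pt f g ≤
      condEnt (fun ω => t * P ω + (1 - t) * Pt ω) f g := by
  have key : ∑ a, ∑ b,
      pushf (fun ω => t * P ω + (1 - t) * Pt ω) (fun ω => (f ω, g ω)) (a, b) *
        Real.log (pushf (fun ω => t * P ω + (1 - t) * Pt ω) (fun ω => (f ω, g ω)) (a, b) /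
          pushf (fun ω => t * P ω + (1 - t) * Pt ω) f a) ≤
      t * (∑ a, ∑ b, pushf P (fun ω => (f ω, g ω)) (a, b) *
        Real.log (pushf P (fun ω => (f ω, g ω)) (a, b) / pushf P f a)) +
      (1 - t) * (∑ a, ∑ b, pushf Pt (fun ω => (f ω, g ω)) (a, b) *
        Real.log (pushf Pt (fun ω => (f ω, g ω)) (a, b) / pushf Pt f a)) := by
    rw [Finset.mul_sum, Finset.mul_sum, ← Finset.sum_add_distrib]
    apply Finset.sum_le_sum
    intro a _
    rw [Finset.mul_sum, Finset.mul_sum, ← Finset.sum_add_distrib]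
    apply Finset.sum_le_sum
    intro b _
    rw [pushf_lin, pushf_lin]
    apply phi_seg t _ _ _ _ ht0 ht1
      (pushf_nonneg hP _ _) (pushf_nonneg hPt _ _) (pushf_nonneg hP f a) (pushf_nonneg hPt f a)
    · intro h
      have h1 := pushf_pair_le_left hP f g a b
      have h2 := pushf_nonneg hP (fun ω => (f ω, g ω)) (a, b)
      linarith
    · intro h
      have h1 := pushf_pair_le_left hPt f g a b
      have h2 := pushf_nonneg hPt (fun ω => (f ω, g ω)) (a, b)
      linarith
  simp only [condEnt]
  linarith

/-- Convexity of mutual information along segments with fixed first marginal. -/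
lemma mutI_seg {α β : Type*} [Fintype α] [DecidableEq α] [Fintype β] [DecidableEq β]
    (P Pt : Ω → ℝ) (hP : ∀ ω, 0 ≤ P ω) (hPt : ∀ ω, 0 ≤ Pt ω)
    (f : Ω → α) (g : Ω → β) (Q : α → ℝ)
    (hPf : pushf P f = Q) (hPtf : pushf Pt f = Q)
    (t : ℝ) (ht0 : 0 ≤ t) (ht1 : t ≤ 1) :
    mutI (fun ω => t * P ω + (1 - t) * Pt ω) f g ≤
      t * mutI P f g + (1 - t) * mutI Pt f g := by
  have hQ : ∀ a, 0 ≤ Q a := fun a => hPf ▸ pushf_nonneg hP f a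
  simp only [mutI]
  rw [Finset.mul_sum, Finset.mul_sum, ← Finset.sum_add_distrib]
  apply Finset.sum_le_sum
  intro a _
  rw [Finset.mul_sum, Finset.mul_sum, ← Finset.sum_add_distrib]
  apply Finset.sum_le_sum
  intro b _
  rw [pushf_lin, pushf_lin, pushf_lin, hPf, hPtf]
  have hd : (t * Q a + (1 - t) * Q a) *
      (t * pushf P g b + (1 - t) * pushf Pt g b) =
      t * (Q a * pushf P g b) + (1 - t) * (Q a * pushf Pt g b) := by ring
  rw [hd]
  apply phi_seg t _ _ _ _ ht0 ht1
    (pushf_nonneg hP _ _) (pushf_nonneg hPt _ _)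
    (mul_nonneg (hQ a) (pushf_nonneg hP g b)) (mul_nonneg (hQ a) (pushf_nonneg hPt g b))
  · intro h
    have h1 := pushf_pair_le_left hP f g a b
    have h2 := pushf_pair_le_right hP f g a b
    have h3 := pushf_nonneg hP (fun ω => (f ω, g ω)) (a, b)
    rcases mul_eq_zero.1 h with h | h
    · rw [hPf] at h1; linarith [h ▸ h1]
    · linarith [h ▸ h2]
  · intro h
    have h1 := pushf_pair_le_left hPt f g a b
    have h2 := pushf_pair_le_right hPt f g a b
    have h3 := pushf_nonneg hPt (fun ω => (f ω, g ω)) (a, b)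
    rcases mul_eq_zero.1 h with h | h
    · rw [hPtf] at h1; linarith [h ▸ h1]
    · linarith [h ▸ h2]

end AuxConvexity


section MaxSeg

lemma maxC_seg {t R2 c M0 M1 M2 : ℝ} (ht0 : 0 ≤ t) (ht1 : t ≤ 1) (hc0 : 0 ≤ c)
    (hM : M0 ≤ t * M1 + (1 - t) * M2) :
    max (M0 - R2) (c * (M0 - R2)) ≤
      t * max (M1 - R2) (c * (M1 - R2)) + (1 - t) * max (M2 - R2) (c * (M2 - R2)) := by
  have ht1' : 0 ≤ 1 - t := by linarith
  have key : M0 - R2 ≤ t * (M1 - R2) + (1 - t) * (M2 - R2) := by nlinarith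
  apply max_le
  · exact key.trans (add_le_add (mul_le_mul_of_nonneg_left (le_max_left _ _) ht0)
      (mul_le_mul_of_nonneg_left (le_max_left _ _) ht1'))
  · calc c * (M0 - R2) ≤ c * (t * (M1 - R2) + (1 - t) * (M2 - R2)) :=
          mul_le_mul_of_nonneg_left key hc0
      _ = t * (c * (M1 - R2)) + (1 - t) * (c * (M2 - R2)) := by ring
      _ ≤ _ := add_le_add (mul_le_mul_of_nonneg_left (le_max_right _ _) ht0)
          (mul_le_mul_of_nonneg_left (le_max_right _ _) ht1')

lemma maxD_seg {t R2 ρ lam N0 N1 N2 K0 K1 K2 : ℝ} (ht0 : 0 ≤ t) (ht1 : t ≤ 1)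
    (hρ0 : 0 ≤ ρ) (hρ1 : ρ ≤ 1) (hl0 : 0 ≤ lam)
    (hN : N0 ≤ t * N1 + (1 - t) * N2) (hK : K0 ≤ t * K1 + (1 - t) * K2) :
    max (max ((1 - ρ) * N0 + ρ * K0 - R2) (ρ * (K0 - R2))) (ρ * lam * (K0 - R2)) ≤
      t * max (max ((1 - ρ) * N1 + ρ * K1 - R2) (ρ * (K1 - R2))) (ρ * lam * (K1 - R2)) +
      (1 - t) * max (max ((1 - ρ) * N2 + ρ * K2 - R2) (ρ * (K2 - R2)))
        (ρ * lam * (K2 - R2)) := by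
  have ht1' : 0 ≤ 1 - t := by linarith
  have hρ1' : 0 ≤ 1 - ρ := by linarith
  have hρl : 0 ≤ ρ * lam := mul_nonneg hρ0 hl0
  have keyK : K0 - R2 ≤ t * (K1 - R2) + (1 - t) * (K2 - R2) := by nlinarith
  apply max_le
  apply max_le
  · have a1 : (1 - ρ) * N0 + ρ * K0 - R2 ≤
        t * ((1 - ρ) * N1 + ρ * K1 - R2) + (1 - t) * ((1 - ρ) * N2 + ρ * K2 - R2) := by
      nlinarith [mul_le_mul_of_nonneg_left hN hρ1', mul_le_mul_of_nonneg_left hK hρ0]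
    exact a1.trans (add_le_add
      (mul_le_mul_of_nonneg_left ((le_max_left _ _).trans (le_max_left _ _)) ht0)
      (mul_le_mul_of_nonneg_left ((le_max_left _ _).trans (le_max_left _ _)) ht1'))
  · have a2 : ρ * (K0 - R2) ≤ t * (ρ * (K1 - R2)) + (1 - t) * (ρ * (K2 - R2)) := by
      nlinarith [mul_le_mul_of_nonneg_left keyK hρ0]
    exact a2.trans (add_le_add
      (mul_le_mul_of_nonneg_left ((le_max_right _ _).trans (le_max_left _ _)) ht0)
      (mul_le_mul_of_nonneg_left ((le_max_right _ _).trans (le_max_left _ _)) ht1'))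
  · have a3 : ρ * lam * (K0 - R2) ≤
        t * (ρ * lam * (K1 - R2)) + (1 - t) * (ρ * lam * (K2 - R2)) := by
      nlinarith [mul_le_mul_of_nonneg_left keyK hρl]
    exact a3.trans (add_le_add
      (mul_le_mul_of_nonneg_left (le_max_right _ _) ht0)
      (mul_le_mul_of_nonneg_left (le_max_right _ _) ht1'))

lemma f1_assemble {t ρ g0 g1 g2 c0 c1 c2 i0 i1 i2 C0 C1 C2 D0 D1 D2 : ℝ}
    (hρ0 : 0 ≤ ρ)
    (hg : g0 = t * g1 + (1 - t) * g2)
    (hc : t * c1 + (1 - t) * c2 ≤ c0)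
    (hi : i0 ≤ t * i1 + (1 - t) * i2)
    (hC : C0 ≤ t * C1 + (1 - t) * C2)
    (hD : D0 ≤ t * D1 + (1 - t) * D2) :
    g0 - c0 + ρ * i0 + C0 + D0 ≤
      t * (g1 - c1 + ρ * i1 + C1 + D1) + (1 - t) * (g2 - c2 + ρ * i2 + C2 + D2) := by
  nlinarith [mul_le_mul_of_nonneg_left hi hρ0]

end MaxSeg

/-- `D(Q1,Q2)` is convex and `(P,P') ↦ f1(ρ,λ,P,P')` is convex on it. -/
theorem stmt1 {X1 X2 Y1 : Type*} [Fintype X1] [DecidableEq X1] [Fintype X2] [DecidableEq X2]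
    [Fintype Y1] [DecidableEq Y1]
    (q1 : X1 → X2 → Y1 → ℝ) (hq_pos : ∀ x1 x2 y, 0 < q1 x1 x2 y)
    (hq_sum : ∀ x1 x2, ∑ y, q1 x1 x2 y = 1)
    (ρ lam : ℝ) (hρ0 : 0 ≤ ρ) (hρ1 : ρ ≤ 1) (hlam0 : 0 ≤ lam) (hlam1 : lam ≤ 1)
    (R2 : ℝ) (Q1 : X1 → ℝ) (Q2 : X2 → ℝ) (hQ1 : IsPMF Q1) (hQ2 : IsPMF Q2) :
    Convex ℝ (DsetPair Y1 Q1 Q2) ∧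
    ∀ PP ∈ DsetPair Y1 Q1 Q2, ∀ PPt ∈ DsetPair Y1 Q1 Q2, ∀ t : ℝ, 0 ≤ t → t ≤ 1 →
      f1Fun q1 R2 ρ lam (fun z => t * PP.1 z + (1 - t) * PPt.1 z)
          (fun z => t * PP.2 z + (1 - t) * PPt.2 z)
        ≤ t * f1Fun q1 R2 ρ lam PP.1 PP.2 + (1 - t) * f1Fun q1 R2 ρ lam PPt.1 PPt.2 := by
  have hρlam : ρ * lam ≤ 1 := by nlinarith
  constructor
  · intro x hx y hy a b ha hb hab
    obtain ⟨hx1, hx2, hx3, hx4, hx5, hx6⟩ := hx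
    obtain ⟨hy1, hy2, hy3, hy4, hy5, hy6⟩ := hy
    exact ⟨IsPMF_mix hx1 hy1 a b ha hb hab, IsPMF_mix hx2 hy2 a b ha hb hab,
      pushf_mix_eq hx3 hy3 a b hab, pushf_mix_eq hx4 hy4 a b hab,
      pushf_mix_eq hx5 hy5 a b hab, pushf_mix_eq hx6 hy6 a b hab⟩
  · intro PP hPP PPt hPPt t ht0 ht1
    obtain ⟨hP1, hP2, hP1x1, hP2x1, hP1x2, hP2x2⟩ := hPP
    obtain ⟨hQ1', hQ2', hQ1x1, hQ2x1, hQ1x2, hQ2x2⟩ := hPPt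
    have hg : gFun q1 ρ lam (fun z => t * PP.1 z + (1 - t) * PPt.1 z)
        (fun z => t * PP.2 z + (1 - t) * PPt.2 z) =
        t * gFun q1 ρ lam PP.1 PP.2 + (1 - t) * gFun q1 ρ lam PPt.1 PPt.2 := by
      simp only [gFun]
      rw [sum_mix t (1 - t) PP.1 PPt.1, sum_mix t (1 - t) PP.2 PPt.2]
      ring
    have hce := condEnt_seg PP.1 PPt.1 hP1.1 hQ1'.1 (fun z => z.1) (fun z => z.2.2) t ht0 ht1
    have hm1 := mutI_seg PP.2 PPt.2 hP2.1 hQ2'.1 (fun z => z.1) (fun z => z.2.2) Q1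
      hP2x1 hQ2x1 t ht0 ht1
    have hm2 := mutI_seg PP.1 PPt.1 hP1.1 hQ1'.1 (fun z => z.2.1) (fun z => (z.1, z.2.2)) Q2
      hP1x2 hQ1x2 t ht0 ht1
    have hm3 := mutI_seg PP.2 PPt.2 hP2.1 hQ2'.1 (fun z => z.2.1) (fun z => z.2.2) Q2
      hP2x2 hQ2x2 t ht0 ht1
    have hm4 := mutI_seg PP.2 PPt.2 hP2.1 hQ2'.1 (fun z => z.2.1) (fun z => (z.1, z.2.2)) Q2
      hP2x2 hQ2x2 t ht0 ht1
    simp only [f1Fun]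
    exact f1_assemble hρ0 hg hce hm1
      (maxC_seg ht0 ht1 (by linarith) hm2)
      (maxD_seg ht0 ht1 hρ0 hρ1 hlam0 hm3 hm4)
end

section
/- Let E be a real normed vector space, D ⊆ E a convex set, f : D → ℝ a convex function, g : D → ℝ a function continuous on D (with the subspace topology), and c ∈ ℝ. Suppose P1 ∈ D satisfies f(P1) ≤ f(P) for all P ∈ D and g(P1) < c, and suppose P2 ∈ C := {P ∈ D : c ≤ g(P)} satisfies f(P2) ≤ f(P) for all P ∈ C. Then there exists P̄ ∈ C with g(P̄) = c and f(P̄) ≤ f(P) for all P ∈ C; that is, the constrained minimum of f over C is attained at a point where the constraint holds with equality. -/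
/-- if the unconstrained minimizer of a convex `f` over a convex `D` strictly
violates the constraint `c ≤ g`, then the minimum of `f` over `C = {P ∈ D : c ≤ g P}` is
attained at a point where the constraint holds with equality. -/
theorem stmt3 {E : Type*} [NormedAddCommGroup E] [NormedSpace ℝ E]
    (D : Set E) (hD : Convex ℝ D) (f g : E → ℝ)
    (hf : ConvexOn ℝ D f) (hg : ContinuousOn g D) (c : ℝ)
    (P1 : E) (hP1 : P1 ∈ D) (hP1min : ∀ P ∈ D, f P1 ≤ f P) (hgP1 : g P1 < c)
    (P2 : E) (hP2 : P2 ∈ {P | P ∈ D ∧ c ≤ g P})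
    (hP2min : ∀ P ∈ {P | P ∈ D ∧ c ≤ g P}, f P2 ≤ f P) :
    ∃ Pb ∈ {P | P ∈ D ∧ c ≤ g P},
      g Pb = c ∧ ∀ P ∈ {P | P ∈ D ∧ c ≤ g P}, f Pb ≤ f P := by
  obtain ⟨hP2D, hgP2⟩ := hP2
  set φ : ℝ → E := fun t => (1 - t) • P1 + t • P2 with hφ
  have hmaps : ∀ t ∈ Set.Icc (0:ℝ) 1, φ t ∈ D := by
    intro t ht
    exact hD hP1 hP2D (by linarith [ht.2]) ht.1 (by ring)
  have hφc : ContinuousOn φ (Set.Icc (0:ℝ) 1) := by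
    apply Continuous.continuousOn
    continuity
  have hcomp : ContinuousOn (g ∘ φ) (Set.Icc (0:ℝ) 1) :=
    hg.comp hφc hmaps
  have h0 : (g ∘ φ) 0 = g P1 := by simp [hφ]
  have h1 : (g ∘ φ) 1 = g P2 := by simp [hφ]
  have hiv : c ∈ Set.Icc ((g ∘ φ) 0) ((g ∘ φ) 1) := by
    rw [h0, h1]; exact ⟨le_of_lt hgP1, hgP2⟩
  obtain ⟨t, ht, hgt⟩ := intermediate_value_Icc (by norm_num) hcomp hiv
  refine ⟨φ t, ⟨hmaps t ht, le_of_eq hgt.symm⟩, hgt, ?_⟩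
  intro P hP
  have hfb : f (φ t) ≤ (1 - t) * f P1 + t * f P2 :=
    hf.2 hP1 hP2D (by linarith [ht.2]) ht.1 (by ring)
  have h1 : f P1 ≤ f P2 := hP1min _ hP2D
  have : f (φ t) ≤ f P2 := by nlinarith [ht.1, ht.2]
  exact this.trans (hP2min P hP)
end

section
/- Let K be a nonempty compact convex subset of ℝ^d, and let m1, m2 : K → ℝ be continuous concave functions. Then sup_{p∈K} min{m1(p), m2(p)} = inf_{θ∈[0,1]} sup_{p∈K} ( θ·m1(p) + (1−θ)·m2(p) ). -/
/-!
Let `S` be the left-hand side. Pointwise `min (m1 p) (m2 p) ≤ θ m1 p + (1 - θ) m2 p`, which gives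
`≤`. Conversely, for `ε > 0` the set of points of `ℝ²` dominated by some `(m1 p, m2 p)`, `p ∈ K`,
is convex by concavity, closed by compactness, and misses `(S + ε, S + ε)`. A functional
`(x, y) ↦ a x + b y` separating them has `a, b ≥ 0` because the set is a lower set, and
`θ = a / (a + b)` then bounds every `θ m1 p + (1 - θ) m2 p` by `S + ε`.
-/

open Set
open scoped Pointwise

theorem ConcaveOn.prodMk {𝕜 E β γ : Type*} [Semiring 𝕜] [PartialOrder 𝕜] [AddCommMonoid E]
    [AddCommMonoid β] [PartialOrder β] [AddCommMonoid γ] [PartialOrder γ] [SMul 𝕜 E] [SMul 𝕜 β]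
    [SMul 𝕜 γ] {s : Set E} {f : E → β} {g : E → γ} (hf : ConcaveOn 𝕜 s f) (hg : ConcaveOn 𝕜 s g) :
    ConcaveOn 𝕜 s fun x ↦ (f x, g x) :=
  ⟨hf.1, fun _ hx _ hy _ _ ha hb hab ↦ ⟨hf.2 hx hy ha hb hab, hg.2 hx hy ha hb hab⟩⟩

theorem ConcaveOn.convex_lowerClosure_image {𝕜 E β : Type*} [Semiring 𝕜] [PartialOrder 𝕜]
    [AddCommMonoid E] [AddCommMonoid β] [PartialOrder β] [IsOrderedAddMonoid β] [Module 𝕜 E]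
    [Module 𝕜 β] [PosSMulMono 𝕜 β] {s : Set E} {f : E → β} (hf : ConcaveOn 𝕜 s f) :
    Convex 𝕜 (lowerClosure (f '' s) : Set β) := by
  have : (lowerClosure (f '' s) : Set β) =
      LinearMap.snd 𝕜 E β '' {p | p.1 ∈ s ∧ p.2 ≤ f p.1} := by
    ext z
    simp [mem_lowerClosure]
  rw [this]
  exact hf.convex_hypograph.linear_image _

theorem IsCompact.isClosed_lowerClosure {G : Type*} [AddCommGroup G] [PartialOrder G]
    [IsOrderedAddMonoid G] [TopologicalSpace G] [IsTopologicalAddGroup G] [ClosedIicTopology G]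
    {s : Set G} (hs : IsCompact s) : IsClosed (lowerClosure s : Set G) := by
  have : (lowerClosure s : Set G) = s + Iic (0 : G) := by
    rw [← LowerSet.coe_Iic, ← lowerClosure_singleton, add_lowerClosure, add_singleton]
    simp
  rw [this]
  exact isClosed_Iic.add_left_of_isCompact hs

theorem IsLowerSet.map_nonneg_of_forall_lt {E : Type*} [AddCommGroup E] [PartialOrder E]
    [IsOrderedAddMonoid E] [Module ℝ E] [PosSMulMono ℝ E] {C : Set E} (hC : IsLowerSet C)
    {c : E} (hc : c ∈ C) (f : E →ₗ[ℝ] ℝ) {u : ℝ} (hfu : ∀ x ∈ C, f x < u) {v : E} (hv : 0 ≤ v) :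
    0 ≤ f v := by
  by_contra! hfv
  set s := (u - f c) / -f v
  have hs : 0 ≤ s := div_nonneg (sub_nonneg.2 (hfu c hc).le) (neg_nonneg.2 hfv.le)
  have hmem : c - s • v ∈ C := hC (sub_le_self _ (smul_nonneg hs hv)) hc
  have : f (c - s • v) = u := by
    simp only [map_sub, map_smul, smul_eq_mul, s]
    field_simp [hfv.ne]
    ring
  exact (hfu _ hmem).ne this

theorem exists_mem_Icc_forall_lt_of_diag_notMem {C : Set (ℝ × ℝ)} (hCne : C.Nonempty)
    (hCconv : Convex ℝ C) (hCclosed : IsClosed C) (hClower : IsLowerSet C) {t : ℝ}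
    (ht : (t, t) ∉ C) : ∃ θ ∈ Icc (0 : ℝ) 1, ∀ c ∈ C, θ * c.1 + (1 - θ) * c.2 < t := by
  obtain ⟨c₀, hc₀⟩ := hCne
  obtain ⟨f, u, hfC, hut⟩ := geometric_hahn_banach_closed_point hCconv hCclosed ht
  set a := f (1, 0)
  set b := f (0, 1)
  have hf (z : ℝ × ℝ) : f z = a * z.1 + b * z.2 := by
    conv_lhs => rw [show z = z.1 • ((1 : ℝ), (0 : ℝ)) + z.2 • (0, 1) by ext <;> simp]
    rw [map_add, map_smul, map_smul, smul_eq_mul, smul_eq_mul, mul_comm z.1, mul_comm z.2]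
  have ha : 0 ≤ a :=
    hClower.map_nonneg_of_forall_lt hc₀ f.toLinearMap hfC (v := (1, 0)) (by simp [Prod.le_def])
  have hb : 0 ≤ b :=
    hClower.map_nonneg_of_forall_lt hc₀ f.toLinearMap hfC (v := (0, 1)) (by simp [Prod.le_def])
  have hfc₀ := hf c₀ ▸ hfC c₀ hc₀
  simp only [hf] at hut
  have hab : 0 < a + b := by
    by_contra! h
    have ha0 : a = 0 := by linarith
    have hb0 : b = 0 := by linarith
    rw [ha0, hb0] at hut hfc₀
    linarith
  refine ⟨a / (a + b), ⟨by positivity, (div_le_one hab).2 (by linarith)⟩, fun c hc ↦ ?_⟩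
  have hfc := hf c ▸ hfC c hc
  have : a / (a + b) * c.1 + (1 - a / (a + b)) * c.2 = (a * c.1 + b * c.2) / (a + b) := by
    field_simp
    ring
  rw [this, div_lt_iff₀ hab]
  linarith

theorem stmt10_general {d : ℕ} (K : Set (Fin d → ℝ)) (hKne : K.Nonempty) (hKcomp : IsCompact K)
    (m1 m2 : (Fin d → ℝ) → ℝ)
    (hm1c : ContinuousOn m1 K) (hm2c : ContinuousOn m2 K)
    (hm1 : ConcaveOn ℝ K m1) (hm2 : ConcaveOn ℝ K m2) :
    (⨆ p : K, min (m1 ↑p) (m2 ↑p)) =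
      ⨅ θ : Set.Icc (0 : ℝ) 1, ⨆ p : K, ((θ : ℝ) * m1 ↑p + (1 - (θ : ℝ)) * m2 ↑p) := by
  have : Nonempty K := hKne.to_subtype
  set S := ⨆ p : K, min (m1 p) (m2 p)
  have hbdd {g : (Fin d → ℝ) → ℝ} (hg : ContinuousOn g K) : BddAbove (range fun p : K ↦ g p) :=
    image_eq_range g K ▸ hKcomp.bddAbove_image hg
  have hmin_bdd : BddAbove (range fun p : K ↦ min (m1 p) (m2 p)) := hbdd (hm1c.inf hm2c)
  have hcombo_bdd (θ : ℝ) : BddAbove (range fun p : K ↦ θ * m1 p + (1 - θ) * m2 p) :=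
    hbdd ((continuousOn_const.mul hm1c).add (continuousOn_const.mul hm2c))
  have hS_le (θ : Icc (0 : ℝ) 1) : S ≤ ⨆ p : K, (θ : ℝ) * m1 p + (1 - θ) * m2 p :=
    ciSup_mono (hcombo_bdd θ) fun _ ↦
      Convex.min_le_combo _ _ θ.2.1 (sub_nonneg.2 θ.2.2) (add_sub_cancel _ _)
  refine le_antisymm (le_ciInf hS_le) (le_of_forall_pos_le_add fun ε hε ↦ ?_)
  set F : (Fin d → ℝ) → ℝ × ℝ := fun p ↦ (m1 p, m2 p)
  have hdiag : (S + ε, S + ε) ∉ (lowerClosure (F '' K) : Set (ℝ × ℝ)) := by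
    rintro ⟨_, ⟨p, hp, rfl⟩, h1, h2⟩
    linarith [le_min h1 h2, le_ciSup hmin_bdd ⟨p, hp⟩]
  obtain ⟨θ, hθ, hlt⟩ := exists_mem_Icc_forall_lt_of_diag_notMem
    ((hKne.image F).mono subset_lowerClosure) (hm1.prodMk hm2).convex_lowerClosure_image
    (hKcomp.image_of_continuousOn (hm1c.prodMk hm2c)).isClosed_lowerClosure
    (lowerClosure _).lower hdiag
  calc _ ≤ ⨆ p : K, θ * m1 p + (1 - θ) * m2 p :=
        ciInf_le ⟨S, forall_mem_range.2 hS_le⟩ ⟨θ, hθ⟩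
    _ ≤ S + ε := ciSup_le fun p ↦ (hlt _ (subset_lowerClosure ⟨p, p.2, rfl⟩)).le

/-- min-max exchange for two continuous concave functions on a nonempty
compact convex subset of `ℝ^d`. -/
theorem stmt10 {d : ℕ} (K : Set (Fin d → ℝ)) (hKne : K.Nonempty) (hKcomp : IsCompact K)
    (hKconv : Convex ℝ K) (m1 m2 : (Fin d → ℝ) → ℝ)
    (hm1c : ContinuousOn m1 K) (hm2c : ContinuousOn m2 K)
    (hm1 : ConcaveOn ℝ K m1) (hm2 : ConcaveOn ℝ K m2) :
    (⨆ p : K, min (m1 ↑p) (m2 ↑p)) =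
      ⨅ θ : Set.Icc (0 : ℝ) 1, ⨆ p : K, ((θ : ℝ) * m1 ↑p + (1 - (θ : ℝ)) * m2 ↑p) :=
  stmt10_general K hKne hKcomp m1 m2 hm1c hm2c hm1 hm2
end

section
/- Fix R2 ≥ 0, pmfs Q1 on 𝒳1 and Q2 on 𝒳2, and a channel q1 with q1(y|x1,x2) > 0 for all arguments. Then sup_{(ρ,λ)∈[0,1]²} E_{R,1}(0, R2, Q1, Q2, ρ, λ) ≥ min{ inf_{P∈𝒫(Q1,Q2)} [ D(P) + I(X̂1;X̂2) + I(X̂1;Ŷ1) + |I(X̂2;(X̂1,Ŷ1)) − R2|⁺ ] , inf_{P∈𝒫(Q1,Q2)} [ D(P) + I(X̂1;X̂2) + I(X̂1;(X̂2,Ŷ1)) ] }, where all information quantities inside the infima are computed under P. -/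
open Finset

section Benchmark

variable {X1 X2 Y1 : Type*} [Fintype X1] [DecidableEq X1] [Fintype X2] [DecidableEq X2]
  [Fintype Y1] [DecidableEq Y1]

/-- The conditional relative entropy `D(P_{Ŷ1|X̂1,X̂2} ‖ q1 | P_{X̂1,X̂2})`. -/
noncomputable def Dq (q1 : X1 → X2 → Y1 → ℝ) (P : X1 × X2 × Y1 → ℝ) : ℝ :=
  ∑ z, P z * Real.log (P z /
    (pushf P (fun w => (w.1, w.2.1)) (z.1, z.2.1) * q1 z.1 z.2.1 z.2.2))

/-- The set `𝒫(Q1,Q2)` of joint pmfs on `X1 × X2 × Y1` with the prescribed marginals. -/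
def Pset (Y1 : Type*) [Fintype Y1] [DecidableEq Y1] {X1 X2 : Type*}
    [Fintype X1] [DecidableEq X1] [Fintype X2] [DecidableEq X2]
    (Q1 : X1 → ℝ) (Q2 : X2 → ℝ) : Set (X1 × X2 × Y1 → ℝ) :=
  {P | IsPMF P ∧ pushf P (fun z => z.1) = Q1 ∧ pushf P (fun z => z.2.1) = Q2}

/-- The benchmark exponent `E_{1,2}(R1,R2)`. -/
noncomputable def E12 (q1 : X1 → X2 → Y1 → ℝ) (Q1 : X1 → ℝ) (Q2 : X2 → ℝ)
    (R1 R2 : ℝ) : EReal :=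
  ⨅ P : Pset Y1 Q1 Q2,
    ((Dq q1 P.1 + mutI P.1 (fun z => z.1) (fun z => z.2.1)
      + max (mutI P.1 (fun z => z.1) (fun z => z.2.2)
          + mutI P.1 (fun z => z.2.1) (fun z => (z.1, z.2.2)) - R1 - R2) 0 : ℝ) : EReal)

/-- The benchmark exponent `E_{1|2}(R1)`. -/
noncomputable def E1g2 (q1 : X1 → X2 → Y1 → ℝ) (Q1 : X1 → ℝ) (Q2 : X2 → ℝ)
    (R1 : ℝ) : EReal :=
  ⨅ P : Pset Y1 Q1 Q2,
    ((Dq q1 P.1 + mutI P.1 (fun z => z.1) (fun z => z.2.1)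
      + max (mutI P.1 (fun z => z.1) (fun z => (z.2.1, z.2.2)) - R1) 0 : ℝ) : EReal)

/-- The benchmark exponent `E_1(R1)`. -/
noncomputable def E1only (q1 : X1 → X2 → Y1 → ℝ) (Q1 : X1 → ℝ) (Q2 : X2 → ℝ)
    (R1 : ℝ) : EReal :=
  ⨅ P : Pset Y1 Q1 Q2,
    ((Dq q1 P.1 + mutI P.1 (fun z => z.1) (fun z => z.2.1)
      + max (mutI P.1 (fun z => z.1) (fun z => z.2.2) - R1) 0 : ℝ) : EReal)

/-- The benchmark exponent `E_{B,1}(R1,R2)`. -/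
noncomputable def EB1 (q1 : X1 → X2 → Y1 → ℝ) (Q1 : X1 → ℝ) (Q2 : X2 → ℝ)
    (R1 R2 : ℝ) : EReal :=
  max (E1only q1 Q1 Q2 R1) (min (E12 q1 Q1 Q2 R1 R2) (E1g2 q1 Q1 Q2 R1))

end Benchmark

/-
Take `ρ = 1` and `λ = 1/2`. For these parameters `R2 + f1(P,P')` is exactly the average of the
first functional of the bound at `P` and at `P'`, and `R2 + f2(P,P')` the average of the second
one: once every information quantity is written as a signed sum of marginal entropies, the only
entropies that do not cancel are those of `Ŷ1` (for `f1`), resp. of `(X̂2,Ŷ1)` and `X̂2` (for `f2`),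
and the constraints of `S1`, resp. `S2`, make them agree under `P` and `P'`. An average of two
values is at least their minimum, and both `P` and `P'` lie in `𝒫(Q1,Q2)`.
-/

theorem EReal.coe_add_iInf {ι : Sort*} (r : ℝ) (g : ι → EReal) :
    (r : EReal) + ⨅ i, g i = ⨅ i, ((r : EReal) + g i) := by
  refine Monotone.map_iInf_of_continuousAt (f := ((r : EReal) + ·)) ?_
    (fun _ _ h => add_le_add_right h _) (EReal.coe_add_top r)
  exact (EReal.continuousAt_add (Or.inl (EReal.coe_ne_top r)) (Or.inl (EReal.coe_ne_bot r))).comp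
    (continuous_const.prodMk continuous_id).continuousAt

theorem iInf_le_coe_midpoint {ι : Type*} {s : Set ι} (F : ι → ℝ) {a b : ι} (ha : a ∈ s)
    (hb : b ∈ s) : ⨅ x : s, (F x : EReal) ≤ ((F a + F b) / 2 : ℝ) := by
  have hmin : min (F a) (F b) ≤ (F a + F b) / 2 := by
    rcases min_cases (F a) (F b) with ⟨h, _⟩ | ⟨h, _⟩ <;> linarith
  refine le_trans ?_ (EReal.coe_le_coe_iff.mpr hmin)
  rcases min_choice (F a) (F b) with h | h <;> rw [h]
  exacts [iInf_le_of_le ⟨a, ha⟩ le_rfl, iInf_le_of_le ⟨b, hb⟩ le_rfl]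

theorem Real.mul_log_div_eq {p a b : ℝ} (ha : p ≠ 0 → a ≠ 0) (hb : p ≠ 0 → b ≠ 0) :
    p * Real.log (a / b) = p * Real.log a - p * Real.log b := by
  by_cases hp : p = 0
  · simp [hp]
  · rw [Real.log_div (ha hp) (hb hp), mul_sub]

theorem Real.mul_log_mul_eq {p a b : ℝ} (ha : p ≠ 0 → a ≠ 0) (hb : p ≠ 0 → b ≠ 0) :
    p * Real.log (a * b) = p * Real.log a + p * Real.log b := by
  by_cases hp : p = 0
  · simp [hp]
  · rw [Real.log_mul (ha hp) (hb hp), mul_add]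

theorem injective_swap_fst {α β γ : Type*} :
    Function.Injective fun z : α × β × γ => (z.2.1, z.1, z.2.2) := by
  rintro ⟨_, _, _⟩ ⟨_, _, _⟩ h
  simp only [Prod.mk.injEq] at h ⊢
  tauto

section Entropy

variable {Ω α β : Type*} [Fintype Ω] [Fintype α] [DecidableEq α] [Fintype β] [DecidableEq β]

theorem sum_pushf_mul (P : Ω → ℝ) (f : Ω → α) (φ : α → ℝ) :
    ∑ a, pushf P f a * φ a = ∑ ω, P ω * φ (f ω) := by
  simp only [pushf, Finset.sum_mul, ite_mul, zero_mul]
  rw [Finset.sum_comm]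
  simp

theorem sum_sum_pushf_mul (P : Ω → ℝ) (h : Ω → α × β) (φ : α → β → ℝ) :
    ∑ a, ∑ b, pushf P h (a, b) * φ a b = ∑ ω, P ω * φ (h ω).1 (h ω).2 := by
  rw [← Fintype.sum_prod_type', sum_pushf_mul P h (fun p => φ p.1 p.2)]

theorem le_pushf_apply {P : Ω → ℝ} (hP : ∀ ω, 0 ≤ P ω) (f : Ω → α) (ω : Ω) :
    P ω ≤ pushf P f (f ω) := by
  have := Finset.single_le_sum (f := fun ω' => if f ω' = f ω then P ω' else 0)
    (fun ω' _ => by split_ifs <;> simp [hP ω']) (Finset.mem_univ ω)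
  simpa [pushf] using this

theorem pushf_apply_ne_zero {P : Ω → ℝ} (hP : ∀ ω, 0 ≤ P ω) (f : Ω → α) {ω : Ω}
    (h : P ω ≠ 0) : pushf P f (f ω) ≠ 0 :=
  ((lt_of_le_of_ne (hP ω) (Ne.symm h)).trans_le (le_pushf_apply hP f ω)).ne'

theorem pushf_apply_of_injective (P : Ω → ℝ) {e : Ω → α} (he : Function.Injective e) (ω : Ω) :
    pushf P e (e ω) = P ω := by
  rw [pushf, Finset.sum_eq_single ω (fun ω' _ hω' => if_neg fun h => hω' (he h)) (by simp),
    if_pos rfl]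

theorem entH_eq_sum (P : Ω → ℝ) (f : Ω → α) :
    entH P f = -∑ ω, P ω * Real.log (pushf P f (f ω)) := by
  rw [entH, sum_pushf_mul P f (fun a => Real.log (pushf P f a))]

theorem entH_of_injective (P : Ω → ℝ) {e : Ω → α} (he : Function.Injective e) :
    entH P e = -∑ ω, P ω * Real.log (P ω) := by
  simp only [entH_eq_sum, pushf_apply_of_injective P he]

theorem entH_eq_of_pushf_eq {P P' : Ω → ℝ} {f : Ω → α} (h : pushf P f = pushf P' f) :
    entH P f = entH P' f := by
  rw [entH, entH, h]

theorem mutI_eq_entH {P : Ω → ℝ} (hP : ∀ ω, 0 ≤ P ω) (f : Ω → α) (g : Ω → β) :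
    mutI P f g = entH P f + entH P g - entH P (fun ω => (f ω, g ω)) := by
  have hterm : ∀ ω, P ω * Real.log (pushf P (fun ω => (f ω, g ω)) (f ω, g ω) /
      (pushf P f (f ω) * pushf P g (g ω))) = P ω * Real.log (pushf P (fun ω => (f ω, g ω))
        (f ω, g ω)) - (P ω * Real.log (pushf P f (f ω)) + P ω * Real.log (pushf P g (g ω))) :=
    fun ω => by
      have hf := pushf_apply_ne_zero hP f (ω := ω)
      have hg := pushf_apply_ne_zero hP g (ω := ω)
      rw [Real.mul_log_div_eq (pushf_apply_ne_zero hP (fun ω => (f ω, g ω)))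
        (fun h => mul_ne_zero (hf h) (hg h)), Real.mul_log_mul_eq hf hg]
  rw [mutI, sum_sum_pushf_mul P (fun ω => (f ω, g ω)), Finset.sum_congr rfl fun ω _ => hterm ω,
    Finset.sum_sub_distrib, Finset.sum_add_distrib, entH_eq_sum, entH_eq_sum, entH_eq_sum]
  ring

theorem condEnt_eq_entH {P : Ω → ℝ} (hP : ∀ ω, 0 ≤ P ω) (f : Ω → α) (g : Ω → β) :
    condEnt P f g = entH P (fun ω => (f ω, g ω)) - entH P f := by
  have hterm : ∀ ω, P ω * Real.log (pushf P (fun ω => (f ω, g ω)) (f ω, g ω) / pushf P f (f ω))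
      = P ω * Real.log (pushf P (fun ω => (f ω, g ω)) (f ω, g ω))
        - P ω * Real.log (pushf P f (f ω)) := fun ω =>
    Real.mul_log_div_eq (pushf_apply_ne_zero hP (fun ω => (f ω, g ω))) (pushf_apply_ne_zero hP f)
  rw [condEnt, sum_sum_pushf_mul P (fun ω => (f ω, g ω)), Finset.sum_congr rfl fun ω _ => hterm ω,
    Finset.sum_sub_distrib, entH_eq_sum, entH_eq_sum]
  ring

end Entropy

section Exponents

variable {X1 X2 Y1 : Type*} [Fintype X1] [DecidableEq X1] [Fintype X2] [DecidableEq X2]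
  [Fintype Y1]

theorem Dq_eq_entH (q1 : X1 → X2 → Y1 → ℝ) (hq : ∀ x1 x2 y, 0 < q1 x1 x2 y)
    {P : X1 × X2 × Y1 → ℝ} (hP : ∀ z, 0 ≤ P z) :
    Dq q1 P = ∑ z, P z * Real.log (P z) + entH P (fun z => (z.1, z.2.1))
      - ∑ z, P z * Real.log (q1 z.1 z.2.1 z.2.2) := by
  have hterm : ∀ z : X1 × X2 × Y1, P z * Real.log (P z /
      (pushf P (fun w => (w.1, w.2.1)) (z.1, z.2.1) * q1 z.1 z.2.1 z.2.2))
      = P z * Real.log (P z) - (P z * Real.log (pushf P (fun w => (w.1, w.2.1)) (z.1, z.2.1))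
        + P z * Real.log (q1 z.1 z.2.1 z.2.2)) := fun z => by
    have h12 := pushf_apply_ne_zero hP (fun w => (w.1, w.2.1)) (ω := z)
    have hqz : P z ≠ 0 → q1 z.1 z.2.1 z.2.2 ≠ 0 := fun _ => (hq _ _ _).ne'
    rw [Real.mul_log_div_eq id (fun h => mul_ne_zero (h12 h) (hqz h)), Real.mul_log_mul_eq h12 hqz]
  rw [Dq, Finset.sum_congr rfl fun z _ => hterm z, Finset.sum_sub_distrib,
    Finset.sum_add_distrib, entH_eq_sum]
  ring

variable [DecidableEq Y1]

noncomputable def sepExponent (q1 : X1 → X2 → Y1 → ℝ) (R2 : ℝ) (P : X1 × X2 × Y1 → ℝ) : ℝ :=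
  Dq q1 P + mutI P (fun z => z.1) (fun z => z.2.1) + mutI P (fun z => z.1) (fun z => z.2.2)
    + max (mutI P (fun z => z.2.1) (fun z => (z.1, z.2.2)) - R2) 0

noncomputable def jointExponent (q1 : X1 → X2 → Y1 → ℝ) (P : X1 × X2 × Y1 → ℝ) : ℝ :=
  Dq q1 P + mutI P (fun z => z.1) (fun z => z.2.1) + mutI P (fun z => z.1) (fun z => (z.2.1, z.2.2))

theorem max_self_half (x : ℝ) : max x (x / 2) = x / 2 + max x 0 / 2 := by
  rcases le_total x 0 with h | h
  · rw [max_eq_right (by linarith), max_eq_right h]; ring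
  · rw [max_eq_left (by linarith), max_eq_left h]; ring

theorem add_f1Fun_eq_midpoint (q1 : X1 → X2 → Y1 → ℝ) (hq : ∀ x1 x2 y, 0 < q1 x1 x2 y) (R2 : ℝ)
    {P P' : X1 × X2 × Y1 → ℝ} (hP : ∀ z, 0 ≤ P z) (hP' : ∀ z, 0 ≤ P' z)
    (hY : pushf P (fun z => z.2.2) = pushf P' (fun z => z.2.2)) :
    R2 + f1Fun q1 R2 1 (1 / 2) P P' = (sepExponent q1 R2 P + sepExponent q1 R2 P') / 2 := by
  have hmax : ∀ x : ℝ, max x ((1 - 1 * (1 / 2)) * x) = x / 2 + max x 0 / 2 := fun x => by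
    rw [← max_self_half, show (1 - 1 * (1 / 2) : ℝ) * x = x / 2 by ring]
  have hmax' : ∀ u x : ℝ, max (max ((1 - 1) * u + 1 * x - R2) (1 * (x - R2)))
      (1 * (1 / 2) * (x - R2)) = (x - R2) / 2 + max (x - R2) 0 / 2 := fun u x => by
    rw [show (1 - 1) * u + 1 * x - R2 = x - R2 by ring, one_mul, max_self,
      show 1 * (1 / 2) * (x - R2) = (x - R2) / 2 by ring, max_self_half]
  unfold f1Fun gFun sepExponent
  rw [hmax, hmax']
  simp only [mutI_eq_entH hP, mutI_eq_entH hP', condEnt_eq_entH hP, Dq_eq_entH q1 hq hP,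
    Dq_eq_entH q1 hq hP', entH_of_injective P injective_swap_fst,
    entH_of_injective P' injective_swap_fst, entH_eq_of_pushf_eq hY]
  ring

theorem add_f2Fun_eq_midpoint (q1 : X1 → X2 → Y1 → ℝ) (hq : ∀ x1 x2 y, 0 < q1 x1 x2 y) (R2 : ℝ)
    {P P' : X1 × X2 × Y1 → ℝ} (hP : ∀ z, 0 ≤ P z) (hP' : ∀ z, 0 ≤ P' z)
    (hX2Y : pushf P (fun z => (z.2.1, z.2.2)) = pushf P' (fun z => (z.2.1, z.2.2)))
    (hX2 : pushf P (fun z => z.2.1) = pushf P' (fun z => z.2.1)) :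
    R2 + f2Fun q1 R2 1 (1 / 2) P P' = (jointExponent q1 P + jointExponent q1 P') / 2 := by
  have hid : Function.Injective fun z : X1 × X2 × Y1 => (z.1, z.2.1, z.2.2) := fun _ _ h => h
  unfold f2Fun gFun jointExponent
  simp only [mutI_eq_entH hP, mutI_eq_entH hP', condEnt_eq_entH hP, Dq_eq_entH q1 hq hP,
    Dq_eq_entH q1 hq hP', entH_of_injective P injective_swap_fst, entH_of_injective P hid,
    entH_of_injective P' hid, entH_eq_of_pushf_eq hX2Y, entH_eq_of_pushf_eq hX2]
  ring

end Exponents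
theorem stmt16_general {X1 X2 Y1 : Type*} [Fintype X1] [DecidableEq X1] [Fintype X2] [DecidableEq X2]
    [Fintype Y1] [DecidableEq Y1]
    (q1 : X1 → X2 → Y1 → ℝ) (hq_pos : ∀ x1 x2 y, 0 < q1 x1 x2 y)
    (R2 : ℝ) (Q1 : X1 → ℝ) (Q2 : X2 → ℝ) :
    min
      (⨅ P : Pset Y1 Q1 Q2,
        ((Dq q1 P.1 + mutI P.1 (fun z => z.1) (fun z => z.2.1)
          + mutI P.1 (fun z => z.1) (fun z => z.2.2)
          + max (mutI P.1 (fun z => z.2.1) (fun z => (z.1, z.2.2)) - R2) 0 : ℝ) : EReal))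
      (⨅ P : Pset Y1 Q1 Q2,
        ((Dq q1 P.1 + mutI P.1 (fun z => z.1) (fun z => z.2.1)
          + mutI P.1 (fun z => z.1) (fun z => (z.2.1, z.2.2)) : ℝ) : EReal))
    ≤ ⨆ ρ : Set.Icc (0 : ℝ) 1, ⨆ lam : Set.Icc (0 : ℝ) 1,
        ER1 q1 0 R2 Q1 Q2 (ρ : ℝ) (lam : ℝ) := by
  refine le_iSup₂_of_le (⟨1, by norm_num⟩ : Set.Icc (0 : ℝ) 1) ⟨1 / 2, by norm_num⟩ ?_
  simp only [ER1, mul_zero, sub_zero, ← min_add_add_left, EReal.coe_add_iInf, ← EReal.coe_add]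
  refine min_le_min (le_iInf ?_) (le_iInf ?_)
  · rintro ⟨⟨P, P'⟩, hP, hP', hY, hP1, hP'1, hP2, hP'2⟩
    rw [add_f1Fun_eq_midpoint q1 hq_pos R2 hP.1 hP'.1 hY]
    exact iInf_le_coe_midpoint (sepExponent q1 R2) ⟨hP, hP1, hP2⟩ ⟨hP', hP'1, hP'2⟩
  · rintro ⟨⟨P, P'⟩, hP, hP', hP1, hP'1, hP2, hP'2, -, hX2Y⟩
    rw [add_f2Fun_eq_midpoint q1 hq_pos R2 hP.1 hP'.1 hX2Y (hP2.trans hP'2.symm)]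
    exact iInf_le_coe_midpoint (jointExponent q1) ⟨hP, hP1, hP2⟩ ⟨hP', hP'1, hP'2⟩

/-- the optimized new exponent at `R1 = 0` dominates the simplified
two-term minimum. -/
theorem stmt16 {X1 X2 Y1 : Type*} [Fintype X1] [DecidableEq X1] [Fintype X2] [DecidableEq X2]
    [Fintype Y1] [DecidableEq Y1]
    (q1 : X1 → X2 → Y1 → ℝ) (hq_pos : ∀ x1 x2 y, 0 < q1 x1 x2 y)
    (hq_sum : ∀ x1 x2, ∑ y, q1 x1 x2 y = 1)
    (R2 : ℝ) (hR2 : 0 ≤ R2) (Q1 : X1 → ℝ) (Q2 : X2 → ℝ) (hQ1 : IsPMF Q1) (hQ2 : IsPMF Q2) :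
    min
      (⨅ P : Pset Y1 Q1 Q2,
        ((Dq q1 P.1 + mutI P.1 (fun z => z.1) (fun z => z.2.1)
          + mutI P.1 (fun z => z.1) (fun z => z.2.2)
          + max (mutI P.1 (fun z => z.2.1) (fun z => (z.1, z.2.2)) - R2) 0 : ℝ) : EReal))
      (⨅ P : Pset Y1 Q1 Q2,
        ((Dq q1 P.1 + mutI P.1 (fun z => z.1) (fun z => z.2.1)
          + mutI P.1 (fun z => z.1) (fun z => (z.2.1, z.2.2)) : ℝ) : EReal))
    ≤ ⨆ ρ : Set.Icc (0 : ℝ) 1, ⨆ lam : Set.Icc (0 : ℝ) 1,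
        ER1 q1 0 R2 Q1 Q2 (ρ : ℝ) (lam : ℝ) :=
  stmt16_general q1 hq_pos R2 Q1 Q2
end
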